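/- Let n ≥ 1 be an integer and σ a real with 0 < 2σ < n. Let K : (0,∞)×ℝⁿ×ℝⁿ → ℝ be measurable with 0 ≤ K(t,x,y) ≤ C₀·φ_σ(x,t)·φ_σ(y,t)·G(x−y, ct) for some constants C₀ > 0, c > 1, all t > 0 and all x,y ∈ ℝⁿ∖{0}, and write (T_t w)(x) = ∫_{ℝⁿ} K(t,x,y) w(y) dy. Suppose w₀ : ℝⁿ → ℝ is measurable, nonnegative, the function x ↦ |x|^σ w₀(x) is essentially bounded, and |x|^σ w₀(x) → 0 as |x| → ∞. Then lim_{t→∞} t^{σ/2}·sup_{x ∈ ℝⁿ∖{0}} φ_σ(x,t)^{−1}·(T_t w₀)(x) = 0. -/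

import Mathlib

open Real MeasureTheory Filter

/-- The Gauss–Weierstrass heat kernel on `ℝⁿ`. -/
noncomputable def heatKernel (n : ℕ) (x : EuclideanSpace ℝ (Fin n)) (t : ℝ) : ℝ :=
  (4 * Real.pi * t) ^ (-(n : ℝ) / 2) * Real.exp (-‖x‖ ^ 2 / (4 * t))

/-- The weight `φ_σ(x,t) = (√t/|x|)^σ` for `|x| ≤ √t`, and `1` for `|x| ≥ √t`. -/
noncomputable def phiWeight (n : ℕ) (σ : ℝ) (x : EuclideanSpace ℝ (Fin n)) (t : ℝ) : ℝ :=
  if ‖x‖ ≤ Real.sqrt t then (Real.sqrt t / ‖x‖) ^ σ else 1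

/-!
Split the datum as `w₀ ≤ M ‖y‖^(-σ)` on the ball `‖y‖ ≤ R` and `w₀ ≤ δ ‖y‖^(-σ)` outside it,
with `δ` small and `R = R(δ)`. By the kernel bound everything reduces to the integral of
`φ_σ(y,t) ‖y‖^(-σ) G(x - y, ct)` in `y`. Where `‖y‖ ≤ √t` this integrand is at most
`t^(σ/2) (4πct)^(-n/2) ‖y‖^(-2σ)`, which is integrable near `0` because `2σ < n`; beyond `√t` it is
at most `t^(-σ/2) G(x - y, ct)`. After multiplication by `t^(σ/2)`, the tail part of the datum thus
contributes `O(δ)` uniformly in `t`, while the part on the fixed ball contributes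
`O(R^(n-2σ) t^(σ-n/2)) → 0`.
-/

open Metric Set

section RadialPower

variable {E : Type*} [NormedAddCommGroup E] [NormedSpace ℝ E] [FiniteDimensional ℝ E]
  [MeasurableSpace E] [BorelSpace E] (μ : Measure E) [μ.IsAddHaarMeasure]

theorem integrableOn_closedBall_norm_rpow_neg [Nontrivial E] {p : ℝ}
    (hp : p < Module.finrank ℝ E) (r : ℝ) :
    IntegrableOn (fun x : E => ‖x‖ ^ (-p)) (closedBall 0 r) μ := by
  refine IntegrableOn.mono_set ?_ (closedBall_subset_ball (lt_add_one r))
  rw [integrableOn_fun_norm_addHaar μ (f := fun y => y ^ (-p))]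
  rcases le_or_gt (r + 1) 0 with hr | hr
  · simp [Ioo_eq_empty_of_le hr]
  have hd : 1 ≤ Module.finrank ℝ E := Module.finrank_pos
  have hs : -1 < ((Module.finrank ℝ E - 1 : ℕ) : ℝ) - p := by
    rw [Nat.cast_sub hd]; push_cast; linarith
  refine ((intervalIntegral.integrableOn_Ioo_rpow_iff hr).2 hs).congr_fun
    (fun y hy => ?_) measurableSet_Ioo
  simp only [smul_eq_mul, sub_eq_add_neg, Real.rpow_add hy.1, Real.rpow_natCast]

theorem setIntegral_closedBall_norm_rpow_neg (p : ℝ) {r : ℝ} (hr : 0 < r) :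
    ∫ x in closedBall (0 : E) r, ‖x‖ ^ (-p) ∂μ
      = r ^ ((Module.finrank ℝ E : ℝ) - p) * ∫ x in closedBall (0 : E) 1, ‖x‖ ^ (-p) ∂μ := by
  have h := Measure.setIntegral_comp_smul_of_pos μ (fun x : E => ‖x‖ ^ (-p)) (closedBall 0 1) hr
  rw [smul_closedBall r (0 : E) zero_le_one, smul_zero, mul_one, Real.norm_of_nonneg hr.le] at h
  simp_rw [norm_smul, Real.norm_of_nonneg hr.le, Real.mul_rpow hr.le (norm_nonneg _)] at h
  rw [integral_const_mul, smul_eq_mul, eq_inv_mul_iff_mul_eq₀ (by positivity)] at h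
  rw [← h, Real.rpow_sub hr, Real.rpow_natCast, Real.rpow_neg hr.le]
  ring

end RadialPower

section HeatKernel
variable {n : ℕ} {s : ℝ}

theorem heatKernel_nonneg (hs : 0 ≤ s) (x : EuclideanSpace ℝ (Fin n)) : 0 ≤ heatKernel n x s := by
  unfold heatKernel; positivity

theorem heatKernel_le (hs : 0 ≤ s) (x : EuclideanSpace ℝ (Fin n)) :
    heatKernel n x s ≤ (4 * π * s) ^ (-(n : ℝ) / 2) := by
  refine mul_le_of_le_one_right (by positivity) (Real.exp_le_one_iff.2 ?_)
  exact div_nonpos_of_nonpos_of_nonneg (by nlinarith [norm_nonneg x]) (by positivity)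

theorem integral_heatKernel (hs : 0 < s) :
    ∫ x : EuclideanSpace ℝ (Fin n), heatKernel n x s = 1 := by
  have hexp : ∀ x : EuclideanSpace ℝ (Fin n), -‖x‖ ^ 2 / (4 * s) = -(4 * s)⁻¹ * ‖x‖ ^ 2 :=
    fun x => by ring
  simp only [heatKernel, hexp, integral_const_mul,
    GaussianFourier.integral_rexp_neg_mul_sq_norm (inv_pos.2 (by positivity : 0 < 4 * s)),
    finrank_euclideanSpace_fin]
  rw [div_inv_eq_mul, ← mul_assoc, mul_comm π 4, ← Real.rpow_add (by positivity),
    neg_div, neg_add_cancel, Real.rpow_zero]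

theorem integrable_heatKernel (hs : 0 < s) :
    Integrable fun x : EuclideanSpace ℝ (Fin n) => heatKernel n x s :=
  .of_integral_ne_zero (by rw [integral_heatKernel hs]; exact one_ne_zero)

theorem continuous_heatKernel (s : ℝ) :
    Continuous fun x : EuclideanSpace ℝ (Fin n) => heatKernel n x s := by
  unfold heatKernel; fun_prop

end HeatKernel

section PhiWeight
variable {n : ℕ} {σ t : ℝ} {y : EuclideanSpace ℝ (Fin n)}

theorem phiWeight_of_norm_le (ht : 0 ≤ t) (hy : ‖y‖ ≤ √t) :
    phiWeight n σ y t = t ^ (σ / 2) * ‖y‖ ^ (-σ) := by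
  rw [phiWeight, if_pos hy, Real.div_rpow (Real.sqrt_nonneg t) (norm_nonneg y), Real.sqrt_eq_rpow,
    ← Real.rpow_mul ht, Real.rpow_neg (norm_nonneg y), div_eq_mul_inv, one_div_mul_eq_div]

theorem phiWeight_of_sqrt_lt (hy : √t < ‖y‖) : phiWeight n σ y t = 1 := by
  rw [phiWeight, if_neg hy.not_ge]

theorem phiWeight_nonneg : 0 ≤ phiWeight n σ y t := by
  unfold phiWeight; split_ifs <;> positivity

theorem phiWeight_pos (hy : y ≠ 0) : 0 < phiWeight n σ y t := by
  unfold phiWeight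
  split_ifs with h
  · exact Real.rpow_pos_of_pos (div_pos ((norm_pos_iff.2 hy).trans_le h) (norm_pos_iff.2 hy)) _
  · exact one_pos

theorem measurable_phiWeight (n : ℕ) (σ t : ℝ) :
    Measurable fun y : EuclideanSpace ℝ (Fin n) => phiWeight n σ y t :=
  Measurable.ite (measurableSet_le measurable_norm measurable_const) (by fun_prop)
    measurable_const

theorem phiWeight_mul_rpow_neg_of_norm_le (hσ : σ ≠ 0) (ht : 0 ≤ t) (hy : ‖y‖ ≤ √t) :
    phiWeight n σ y t * ‖y‖ ^ (-σ) = t ^ (σ / 2) * ‖y‖ ^ (-(2 * σ)) := by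
  rw [phiWeight_of_norm_le ht hy, mul_assoc, ← Real.rpow_add' (norm_nonneg y) (by simpa),
    show -σ + -σ = -(2 * σ) by ring]

end PhiWeight

theorem integrable_indicator_closedBall_norm_rpow_neg {n : ℕ} {p : ℝ} (hp : 0 < p) (hpn : p < n)
    (r : ℝ) :
    Integrable ((closedBall (0 : EuclideanSpace ℝ (Fin n)) r).indicator fun y => ‖y‖ ^ (-p)) := by
  have : Nonempty (Fin n) := ⟨⟨0, by exact_mod_cast hp.trans hpn⟩⟩
  exact (integrable_indicator_iff measurableSet_closedBall).2
    (integrableOn_closedBall_norm_rpow_neg volume (by simpa using hpn) r)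

theorem integral_indicator_closedBall_norm_rpow_neg {n : ℕ} (p : ℝ) {r : ℝ} (hr : 0 < r) :
    ∫ y, (closedBall (0 : EuclideanSpace ℝ (Fin n)) r).indicator (fun y => ‖y‖ ^ (-p)) y
      = r ^ ((n : ℝ) - p) * ∫ y in closedBall (0 : EuclideanSpace ℝ (Fin n)) 1, ‖y‖ ^ (-p) := by
  rw [integral_indicator measurableSet_closedBall, setIntegral_closedBall_norm_rpow_neg _ _ hr,
    finrank_euclideanSpace_fin]

/-- The kernel bound applied to the datum `‖y‖ ^ (-σ)`, divided by `C₀ φ_σ(x,t)`. -/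
noncomputable def weightedHeatProfile (n : ℕ) (σ c t : ℝ) (x y : EuclideanSpace ℝ (Fin n)) : ℝ :=
  phiWeight n σ y t * ‖y‖ ^ (-σ) * heatKernel n (x - y) (c * t)

section WeightedHeatProfile
variable {n : ℕ} {σ c t : ℝ} (x : EuclideanSpace ℝ (Fin n))

theorem weightedHeatProfile_nonneg (hc : 0 ≤ c) (ht : 0 ≤ t) (y : EuclideanSpace ℝ (Fin n)) :
    0 ≤ weightedHeatProfile n σ c t x y :=
  mul_nonneg (mul_nonneg phiWeight_nonneg (by positivity)) (heatKernel_nonneg (by positivity) _)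

theorem measurable_weightedHeatProfile : Measurable (weightedHeatProfile n σ c t x) :=
  ((measurable_phiWeight n σ t).mul (by fun_prop)).mul
    ((continuous_heatKernel _).measurable.comp (measurable_const.sub measurable_id))

theorem weightedHeatProfile_le_of_norm_le (hσ : σ ≠ 0) (hc : 0 < c) (ht : 0 < t)
    {y : EuclideanSpace ℝ (Fin n)} (hy : ‖y‖ ≤ √t) :
    weightedHeatProfile n σ c t x y
      ≤ (4 * π * c) ^ (-(n : ℝ) / 2) * t ^ ((σ - n) / 2) * ‖y‖ ^ (-(2 * σ)) := by
  have hP : (4 * π * (c * t)) ^ (-(n : ℝ) / 2) * t ^ (σ / 2)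
      = (4 * π * c) ^ (-(n : ℝ) / 2) * t ^ ((σ - n) / 2) := by
    rw [← mul_assoc, Real.mul_rpow (by positivity) ht.le, mul_assoc, ← Real.rpow_add ht]
    ring_nf
  rw [weightedHeatProfile, phiWeight_mul_rpow_neg_of_norm_le hσ ht.le hy, ← hP, mul_comm,
    mul_assoc (_ ^ _)]
  exact mul_le_mul_of_nonneg_right (heatKernel_le (by positivity) _) (by positivity)

theorem weightedHeatProfile_le (hσ : 0 < σ) (hc : 0 < c) (ht : 0 < t)
    (y : EuclideanSpace ℝ (Fin n)) :
    weightedHeatProfile n σ c t x y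
      ≤ (4 * π * c) ^ (-(n : ℝ) / 2) * t ^ ((σ - n) / 2)
          * (closedBall 0 √t).indicator (fun z => ‖z‖ ^ (-(2 * σ))) y
        + t ^ (-(σ / 2)) * heatKernel n (x - y) (c * t) := by
  have hG := heatKernel_nonneg (n := n) (mul_pos hc ht).le (x - y)
  by_cases hy : ‖y‖ ≤ √t
  · rw [indicator_of_mem (by simpa using hy)]
    exact le_add_of_le_of_nonneg (weightedHeatProfile_le_of_norm_le x hσ.ne' hc ht hy)
      (by positivity)
  · have hy' : √t < ‖y‖ := not_le.1 hy
    have hpow : ‖y‖ ^ (-σ) ≤ t ^ (-(σ / 2)) := by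
      rw [show -(σ / 2) = 1 / 2 * -σ by ring, Real.rpow_mul ht.le, ← Real.sqrt_eq_rpow]
      exact Real.rpow_le_rpow_of_nonpos (Real.sqrt_pos.2 ht) hy'.le (by linarith)
    rw [indicator_of_notMem (by simpa using hy), mul_zero, zero_add, weightedHeatProfile,
      phiWeight_of_sqrt_lt hy', one_mul]
    exact mul_le_mul_of_nonneg_right hpow hG

theorem integrable_weightedHeatProfile (hσ : 0 < σ) (hσn : 2 * σ < n) (hc : 0 < c) (ht : 0 < t) :
    Integrable (weightedHeatProfile n σ c t x) := by
  have hmajorant : Integrable fun y => (4 * π * c) ^ (-(n : ℝ) / 2) * t ^ ((σ - n) / 2)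
      * (closedBall 0 √t).indicator (fun z => ‖z‖ ^ (-(2 * σ))) y
        + t ^ (-(σ / 2)) * heatKernel n (x - y) (c * t) :=
    ((integrable_indicator_closedBall_norm_rpow_neg (by linarith) hσn _).const_mul _).add
      (((integrable_heatKernel (mul_pos hc ht)).comp_sub_left x).const_mul _)
  refine hmajorant.mono' (measurable_weightedHeatProfile x).aestronglyMeasurable
    (.of_forall fun y => ?_)
  rw [Real.norm_of_nonneg (weightedHeatProfile_nonneg x hc.le ht.le y)]
  exact weightedHeatProfile_le x hσ hc ht y

theorem integral_weightedHeatProfile_le (hσ : 0 < σ) (hσn : 2 * σ < n) (hc : 0 < c)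
    (ht : 0 < t) :
    t ^ (σ / 2) * ∫ y, weightedHeatProfile n σ c t x y
      ≤ (4 * π * c) ^ (-(n : ℝ) / 2)
          * (∫ y in closedBall (0 : EuclideanSpace ℝ (Fin n)) 1, ‖y‖ ^ (-(2 * σ))) + 1 := by
  have hball := integrable_indicator_closedBall_norm_rpow_neg (by linarith) hσn √t
  have hheat := (integrable_heatKernel (mul_pos hc ht)).comp_sub_left x
  have hpow : t ^ (σ / 2) * t ^ ((σ - n) / 2) * √t ^ ((n : ℝ) - 2 * σ) = 1 := by
    rw [Real.sqrt_eq_rpow, ← Real.rpow_mul ht.le, ← Real.rpow_add ht, ← Real.rpow_add ht]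
    ring_nf
    exact Real.rpow_zero t
  have hpow' : t ^ (σ / 2) * t ^ (-(σ / 2)) = 1 := by
    rw [← Real.rpow_add ht, add_neg_cancel, Real.rpow_zero]
  calc t ^ (σ / 2) * ∫ y, weightedHeatProfile n σ c t x y
      ≤ t ^ (σ / 2) * ∫ y, ((4 * π * c) ^ (-(n : ℝ) / 2) * t ^ ((σ - n) / 2)
          * (closedBall 0 √t).indicator (fun z => ‖z‖ ^ (-(2 * σ))) y
          + t ^ (-(σ / 2)) * heatKernel n (x - y) (c * t)) := by
        refine mul_le_mul_of_nonneg_left ?_ (by positivity)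
        exact integral_mono (integrable_weightedHeatProfile x hσ hσn hc ht)
          ((hball.const_mul _).add (hheat.const_mul _)) (weightedHeatProfile_le x hσ hc ht)
    _ = _ := by
        rw [integral_add (hball.const_mul _) (hheat.const_mul _), integral_const_mul,
          integral_const_mul, integral_indicator_closedBall_norm_rpow_neg _ (Real.sqrt_pos.2 ht),
          integral_sub_left_eq_self (fun y => heatKernel n y (c * t)) volume x,
          integral_heatKernel (mul_pos hc ht)]
        linear_combination ((4 * π * c) ^ (-(n : ℝ) / 2)
          * ∫ y in closedBall (0 : EuclideanSpace ℝ (Fin n)) 1, ‖y‖ ^ (-(2 * σ))) * hpow + hpow'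

theorem integral_indicator_weightedHeatProfile_le (hσ : 0 < σ) (hσn : 2 * σ < n) (hc : 0 < c)
    (ht : 0 < t) {R : ℝ} (hR : 0 < R) (hRt : R ≤ √t) :
    t ^ (σ / 2) * ∫ y, (closedBall 0 R).indicator (weightedHeatProfile n σ c t x) y
      ≤ (4 * π * c) ^ (-(n : ℝ) / 2)
          * (∫ y in closedBall (0 : EuclideanSpace ℝ (Fin n)) 1, ‖y‖ ^ (-(2 * σ)))
          * R ^ ((n : ℝ) - 2 * σ) * t ^ (σ - n / 2) := by
  have hball := integrable_indicator_closedBall_norm_rpow_neg (by linarith) hσn R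
  have hpointwise : ∀ y, (closedBall 0 R).indicator (weightedHeatProfile n σ c t x) y
      ≤ (4 * π * c) ^ (-(n : ℝ) / 2) * t ^ ((σ - n) / 2)
          * (closedBall 0 R).indicator (fun z => ‖z‖ ^ (-(2 * σ))) y := by
    intro y
    by_cases hy : y ∈ closedBall (0 : EuclideanSpace ℝ (Fin n)) R
    · rw [indicator_of_mem hy, indicator_of_mem hy]
      exact weightedHeatProfile_le_of_norm_le x hσ.ne' hc ht
        ((mem_closedBall_zero_iff.1 hy).trans hRt)
    · rw [indicator_of_notMem hy, indicator_of_notMem hy, mul_zero]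
  have hpow : t ^ (σ / 2) * t ^ ((σ - n) / 2) = t ^ (σ - n / 2) := by
    rw [← Real.rpow_add ht]
    ring_nf
  calc t ^ (σ / 2) * ∫ y, (closedBall 0 R).indicator (weightedHeatProfile n σ c t x) y
      ≤ t ^ (σ / 2) * ∫ y : EuclideanSpace ℝ (Fin n), (4 * π * c) ^ (-(n : ℝ) / 2)
          * t ^ ((σ - n) / 2) * (closedBall 0 R).indicator (fun z => ‖z‖ ^ (-(2 * σ))) y := by
        refine mul_le_mul_of_nonneg_left ?_ (by positivity)
        exact integral_mono ((integrable_weightedHeatProfile x hσ hσn hc ht).indicator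
          measurableSet_closedBall) (hball.const_mul _) hpointwise
    _ = _ := by
        rw [integral_const_mul, integral_indicator_closedBall_norm_rpow_neg _ hR, ← hpow]
        ring

end WeightedHeatProfile

theorem exists_forall_norm_gt_le_of_tendsto_cocompact {E : Type*} [NormedAddCommGroup E]
    [ProperSpace E] {f : E → ℝ} (hf : Tendsto f (cocompact E) (nhds 0)) {δ : ℝ} (hδ : 0 < δ) :
    ∃ R > 0, ∀ y, R < ‖y‖ → f y ≤ δ := by
  rw [← Metric.cobounded_eq_cocompact, ← comap_norm_atTop] at hf
  obtain ⟨R, hR⟩ :=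
    (Filter.eventually_comap.1 (hf.eventually (ge_mem_nhds hδ))).exists_forall_of_atTop
  exact ⟨max R 1, by positivity, fun y hy => hR _ (le_max_left _ _ |>.trans hy.le) y rfl⟩

section KernelEstimate
variable {n : ℕ} {σ c t C₀ M δ R : ℝ} {K : EuclideanSpace ℝ (Fin n) → EuclideanSpace ℝ (Fin n) → ℝ}
  {x : EuclideanSpace ℝ (Fin n)} {w : EuclideanSpace ℝ (Fin n) → ℝ}

theorem kernel_mul_le_weightedHeatProfile (hc : 0 ≤ c) (ht : 0 ≤ t) (hC₀ : 0 ≤ C₀)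
    {y : EuclideanSpace ℝ (Fin n)}
    (hK : K x y ≤ C₀ * phiWeight n σ x t * phiWeight n σ y t * heatKernel n (x - y) (c * t))
    (hy : y ≠ 0) {v m : ℝ} (hv0 : 0 ≤ v) (hv : ‖y‖ ^ σ * v ≤ m) :
    K x y * v ≤ C₀ * phiWeight n σ x t * m * weightedHeatProfile n σ c t x y := by
  have hv' : v ≤ m * ‖y‖ ^ (-σ) := by
    rw [Real.rpow_neg (norm_nonneg y), ← div_eq_mul_inv, le_div_iff₀' (by positivity)]
    exact hv
  calc K x y * v
      ≤ C₀ * phiWeight n σ x t * phiWeight n σ y t * heatKernel n (x - y) (c * t) * v :=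
        mul_le_mul_of_nonneg_right hK hv0
    _ ≤ C₀ * phiWeight n σ x t * phiWeight n σ y t * heatKernel n (x - y) (c * t)
          * (m * ‖y‖ ^ (-σ)) := by
        gcongr
        · exact mul_nonneg (mul_nonneg (mul_nonneg hC₀ phiWeight_nonneg) phiWeight_nonneg)
            (heatKernel_nonneg (by positivity) _)
    _ = C₀ * phiWeight n σ x t * m * weightedHeatProfile n σ c t x y := by
        rw [weightedHeatProfile]; ring

theorem kernel_mul_le_split (hc : 0 ≤ c) (ht : 0 ≤ t) (hC₀ : 0 ≤ C₀) (hδ : 0 ≤ δ)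
    {y : EuclideanSpace ℝ (Fin n)}
    (hK : K x y ≤ C₀ * phiWeight n σ x t * phiWeight n σ y t * heatKernel n (x - y) (c * t))
    (hy : y ≠ 0) (hw0 : 0 ≤ w y) (hwM : ‖y‖ ^ σ * w y ≤ M)
    (hwδ : R < ‖y‖ → ‖y‖ ^ σ * w y ≤ δ) :
    K x y * w y ≤ C₀ * phiWeight n σ x t * (M * (closedBall 0 R).indicator
      (weightedHeatProfile n σ c t x) y + δ * weightedHeatProfile n σ c t x y) := by
  have hKy := fun m => kernel_mul_le_weightedHeatProfile (m := m) hc ht hC₀ hK hy hw0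
  by_cases hyR : ‖y‖ ≤ R
  · have hδh : 0 ≤ C₀ * phiWeight n σ x t * (δ * weightedHeatProfile n σ c t x y) := by
      have := weightedHeatProfile_nonneg x hc ht (σ := σ) y
      have := phiWeight_nonneg (σ := σ) (t := t) (y := x)
      positivity
    rw [indicator_of_mem (mem_closedBall_zero_iff.2 hyR), mul_add, ← mul_assoc]
    exact le_add_of_le_of_nonneg (hKy M hwM) hδh
  · rw [indicator_of_notMem (by simpa using hyR), mul_zero, zero_add, ← mul_assoc]
    exact hKy δ (hwδ (not_le.1 hyR))

theorem weighted_integral_kernel_mul_le (hσ : 0 < σ) (hσn : 2 * σ < n) (hc : 0 < c) (ht : 0 < t)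
    (hC₀ : 0 ≤ C₀) (hM : 0 ≤ M) (hδ : 0 ≤ δ) (hR : 0 < R) (hRt : R ≤ √t) (hx : x ≠ 0)
    (hK0 : ∀ y, 0 ≤ K x y)
    (hK : ∀ y, y ≠ 0 →
      K x y ≤ C₀ * phiWeight n σ x t * phiWeight n σ y t * heatKernel n (x - y) (c * t))
    (hw0 : ∀ y, 0 ≤ w y) (hwM : ∀ᵐ y, ‖y‖ ^ σ * w y ≤ M)
    (hwδ : ∀ y, R < ‖y‖ → ‖y‖ ^ σ * w y ≤ δ) :
    t ^ (σ / 2) * ((phiWeight n σ x t)⁻¹ * ∫ y, K x y * w y)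
      ≤ C₀ * (M * ((4 * π * c) ^ (-(n : ℝ) / 2)
            * (∫ y in closedBall (0 : EuclideanSpace ℝ (Fin n)) 1, ‖y‖ ^ (-(2 * σ)))
            * R ^ ((n : ℝ) - 2 * σ) * t ^ (σ - n / 2))
          + δ * ((4 * π * c) ^ (-(n : ℝ) / 2)
            * (∫ y in closedBall (0 : EuclideanSpace ℝ (Fin n)) 1, ‖y‖ ^ (-(2 * σ))) + 1)) := by
  have : Nonempty (Fin n) := ⟨⟨0, by exact_mod_cast (by linarith : (0 : ℝ) < n)⟩⟩
  set h := weightedHeatProfile n σ c t x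
  have hint := integrable_weightedHeatProfile x hσ hσn hc ht
  have hintR := hint.indicator (measurableSet_closedBall (x := 0) (ε := R))
  have hintegral : ∫ y, K x y * w y
      ≤ C₀ * phiWeight n σ x t * (M * (∫ y, (closedBall 0 R).indicator h y) + δ * ∫ y, h y) := by
    calc ∫ y, K x y * w y
        ≤ ∫ y, C₀ * phiWeight n σ x t * (M * (closedBall 0 R).indicator h y + δ * h y) := by
          refine integral_mono_of_nonneg (.of_forall fun y => mul_nonneg (hK0 y) (hw0 y))
            (((hintR.const_mul M).add (hint.const_mul δ)).const_mul _) ?_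
          filter_upwards [hwM, compl_mem_ae_iff.2 (measure_singleton 0)] with y hyM hy0
          exact kernel_mul_le_split hc.le ht.le hC₀ hδ (hK y hy0) hy0 (hw0 y) hyM (hwδ y)
      _ = _ := by
          rw [integral_const_mul, integral_add (hintR.const_mul M) (hint.const_mul δ),
            integral_const_mul, integral_const_mul]
  have hφx := phiWeight_pos (σ := σ) (t := t) hx
  calc t ^ (σ / 2) * ((phiWeight n σ x t)⁻¹ * ∫ y, K x y * w y)
      ≤ t ^ (σ / 2) * ((phiWeight n σ x t)⁻¹ * (C₀ * phiWeight n σ x t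
          * (M * (∫ y, (closedBall 0 R).indicator h y) + δ * ∫ y, h y))) := by
        gcongr
    _ = C₀ * (M * (t ^ (σ / 2) * ∫ y, (closedBall 0 R).indicator h y)
          + δ * (t ^ (σ / 2) * ∫ y, h y)) := by
        field_simp
    _ ≤ _ := by
        refine mul_le_mul_of_nonneg_left (add_le_add ?_ ?_) hC₀
        · exact mul_le_mul_of_nonneg_left
            (integral_indicator_weightedHeatProfile_le x hσ hσn hc ht hR hRt) hM
        · exact mul_le_mul_of_nonneg_left (integral_weightedHeatProfile_le x hσ hσn hc ht) hδ

end KernelEstimate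

theorem weighted_sup_tendsto_zero_general (n : ℕ) (σ : ℝ)
    (hσ : 0 < σ) (hσn : 2 * σ < (n : ℝ))
    (K : ℝ → EuclideanSpace ℝ (Fin n) → EuclideanSpace ℝ (Fin n) → ℝ)
    (C₀ c : ℝ) (hC₀ : 0 < C₀) (hc : 1 < c)
    (hK0 : ∀ t > (0 : ℝ), ∀ x y, 0 ≤ K t x y)
    (hK : ∀ t > (0 : ℝ), ∀ x y : EuclideanSpace ℝ (Fin n), x ≠ 0 → y ≠ 0 →
      K t x y ≤ C₀ * phiWeight n σ x t * phiWeight n σ y t * heatKernel n (x - y) (c * t))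
    (w₀ : EuclideanSpace ℝ (Fin n) → ℝ)
    (hw₀0 : ∀ x, 0 ≤ w₀ x)
    (M : ℝ) (hbdd : ∀ᵐ x : EuclideanSpace ℝ (Fin n), ‖x‖ ^ σ * w₀ x ≤ M)
    (hlim : Tendsto (fun x : EuclideanSpace ℝ (Fin n) => ‖x‖ ^ σ * w₀ x)
      (Filter.cocompact _) (nhds 0)) :
    ∀ ε > (0 : ℝ), ∃ T > (0 : ℝ), ∀ t ≥ T, ∀ x : EuclideanSpace ℝ (Fin n), x ≠ 0 →
      t ^ (σ / 2) * ((phiWeight n σ x t)⁻¹ * ∫ y, K t x y * w₀ y) < ε := by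
  intro ε hε
  have hM : 0 ≤ M := by
    obtain ⟨y, hy⟩ := hbdd.exists
    exact (mul_nonneg (by positivity) (hw₀0 y)).trans hy
  set A := ∫ y in closedBall (0 : EuclideanSpace ℝ (Fin n)) 1, ‖y‖ ^ (-(2 * σ))
  set Q := (4 * π * c) ^ (-(n : ℝ) / 2)
  have hQA : 0 ≤ Q * A := mul_nonneg (by positivity)
    (setIntegral_nonneg measurableSet_closedBall fun y _ => by positivity)
  set δ := ε / (2 * C₀ * (Q * A + 1))
  have hδ : C₀ * δ * (Q * A + 1) = ε / 2 := by
    simp only [δ]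
    field_simp
  obtain ⟨R, hR, hRδ⟩ := exists_forall_norm_gt_le_of_tendsto_cocompact hlim (by positivity : 0 < δ)
  have hdecay : Tendsto (fun t : ℝ => C₀ * M * (Q * A * R ^ ((n : ℝ) - 2 * σ)) * t ^ (σ - n / 2))
      atTop (nhds 0) := by
    have := (tendsto_rpow_neg_atTop (by linarith : 0 < (n : ℝ) / 2 - σ)).const_mul
      (C₀ * M * (Q * A * R ^ ((n : ℝ) - 2 * σ)))
    rwa [mul_zero, neg_sub] at this
  obtain ⟨T, hT⟩ := eventually_atTop.1 (hdecay.eventually_lt_const (half_pos hε))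
  refine ⟨max T (R ^ 2), by positivity, fun t ht x hx => ?_⟩
  have ht0 : 0 < t := (by positivity : 0 < R ^ 2).trans_le (le_of_max_le_right ht)
  have hbound := weighted_integral_kernel_mul_le hσ hσn (one_pos.trans hc) ht0 hC₀.le hM
    (by positivity) hR (Real.le_sqrt_of_sq_le (le_of_max_le_right ht)) hx (hK0 t ht0 x)
    (hK t ht0 x · hx) hw₀0 hbdd hRδ
  linarith [hT t (le_of_max_le_left ht)]

/-- If `|x|^σ w₀(x)` is essentially bounded and tends to `0` as `|x| → ∞`, then
`t^{σ/2}·sup_{x ≠ 0} φ_σ(x,t)^{−1}·(T_t w₀)(x) → 0` as `t → ∞`, i.e. for every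
`ε > 0` there is `T` such that the weighted quantity is below `ε` for all `t ≥ T`. -/
theorem weighted_sup_tendsto_zero (n : ℕ) (hn : 1 ≤ n) (σ : ℝ)
    (hσ : 0 < σ) (hσn : 2 * σ < (n : ℝ))
    (K : ℝ → EuclideanSpace ℝ (Fin n) → EuclideanSpace ℝ (Fin n) → ℝ)
    (hKmeas : Measurable fun q : ℝ × EuclideanSpace ℝ (Fin n) × EuclideanSpace ℝ (Fin n) =>
      K q.1 q.2.1 q.2.2)
    (C₀ c : ℝ) (hC₀ : 0 < C₀) (hc : 1 < c)
    (hK0 : ∀ t > (0 : ℝ), ∀ x y, 0 ≤ K t x y)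
    (hK : ∀ t > (0 : ℝ), ∀ x y : EuclideanSpace ℝ (Fin n), x ≠ 0 → y ≠ 0 →
      K t x y ≤ C₀ * phiWeight n σ x t * phiWeight n σ y t * heatKernel n (x - y) (c * t))
    (w₀ : EuclideanSpace ℝ (Fin n) → ℝ) (hw₀meas : Measurable w₀)
    (hw₀0 : ∀ x, 0 ≤ w₀ x)
    (M : ℝ) (hbdd : ∀ᵐ x : EuclideanSpace ℝ (Fin n), ‖x‖ ^ σ * w₀ x ≤ M)
    (hlim : Tendsto (fun x : EuclideanSpace ℝ (Fin n) => ‖x‖ ^ σ * w₀ x)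
      (Filter.cocompact _) (nhds 0)) :
    ∀ ε > (0 : ℝ), ∃ T > (0 : ℝ), ∀ t ≥ T, ∀ x : EuclideanSpace ℝ (Fin n), x ≠ 0 →
      t ^ (σ / 2) * ((phiWeight n σ x t)⁻¹ * ∫ y, K t x y * w₀ y) < ε :=
  weighted_sup_tendsto_zero_general n σ hσ hσn K C₀ c hC₀ hc hK0 hK w₀ hw₀0 M hbdd hlim
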